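/- arXiv:1204.0072 — 2 statements merged into one kernel-verified Lean document; each statement's English description precedes it below -/
import Mathlib

section
/- Let 𝒞1 and 𝒞2 be fuzzy coverings of a finite nonempty set U. If upper_{𝒞1}(C) = upper_{𝒞2}(C) for every C ∈ 𝒞1 ∪ 𝒞2, then ⋃{C_{1x} : x ∈ U, X(x) > 0} = ⋃{C_{2x} : x ∈ U, X(x) > 0} for every fuzzy set X of U, where C_{ix} denotes the neighborhood of x in 𝒞i. -/
instance : Fact ((0:ℝ) ≤ 1) := ⟨zero_le_one⟩

noncomputable section

/-- A fuzzy covering of `U`: a finite nonempty collection of fuzzy sets (maps `U → [0,1]`)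
such that every member is non-null and every point has positive membership in some member. -/
def IsFuzzyCovering {U : Type*} (𝒞 : Set (U → unitInterval)) : Prop :=
  𝒞.Finite ∧ 𝒞.Nonempty ∧ (∀ C ∈ 𝒞, ∃ x, 0 < C x) ∧ (∀ x, ∃ C ∈ 𝒞, 0 < C x)

/-- The neighborhood of `x`: pointwise infimum of all members with positive value at `x`. -/
def nbhd {U : Type*} (𝒞 : Set (U → unitInterval)) (x : U) : U → unitInterval :=
  ⨅ C ∈ {C ∈ 𝒞 | 0 < C x}, C

/-- The lower approximation of `X`: union of all members contained in `X`. -/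
def lowerApprox {U : Type*} (𝒞 : Set (U → unitInterval)) (X : U → unitInterval) :
    U → unitInterval :=
  ⨆ C ∈ {C ∈ 𝒞 | C ≤ X}, C

/-- The upper approximation of `X`. -/
def upperApprox {U : Type*} (𝒞 : Set (U → unitInterval)) (X : U → unitInterval) :
    U → unitInterval :=
  (⨆ x ∈ {x | 0 < X x ∧ lowerApprox 𝒞 X x = 0}, nbhd 𝒞 x) ⊔ lowerApprox 𝒞 X

lemma lowerApprox_self' {U : Type*} (𝒞 : Set (U → unitInterval)) {C : U → unitInterval}
    (hC : C ∈ 𝒞) : lowerApprox 𝒞 C = C := by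
  apply le_antisymm
  · exact iSup₂_le fun C' hC' => hC'.2
  · exact le_iSup₂ (f := fun (C' : U → unitInterval) (_ : C' ∈ {C' ∈ 𝒞 | C' ≤ C}) => C')
      C ⟨hC, le_rfl⟩

lemma upperApprox_self' {U : Type*} (𝒞 : Set (U → unitInterval)) {C : U → unitInterval}
    (hC : C ∈ 𝒞) : upperApprox 𝒞 C = C := by
  have hl := lowerApprox_self' 𝒞 hC
  rw [upperApprox, hl]
  have he : {x | 0 < C x ∧ C x = 0} = ∅ := by
    ext x
    simp only [Set.mem_setOf_eq, Set.mem_empty_iff_false, iff_false, not_and]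
    intro hx h0
    exact absurd h0 hx.ne'
  rw [he]
  simp

lemma nbhd_le_nbhd' {U : Type*} (𝒞₁ 𝒞₂ : Set (U → unitInterval))
    (h : ∀ C ∈ 𝒞₁, upperApprox 𝒞₂ C = C) (x : U) :
    nbhd 𝒞₂ x ≤ nbhd 𝒞₁ x := by
  refine le_iInf₂ fun C hC => ?_
  have hCx : 0 < C x := hC.2
  rcases eq_or_ne (lowerApprox 𝒞₂ C x) 0 with h0 | h0
  · -- x is in the support set for the upper approximation
    calc nbhd 𝒞₂ x
        ≤ ⨆ y ∈ {y | 0 < C y ∧ lowerApprox 𝒞₂ C y = 0}, nbhd 𝒞₂ y :=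
          le_iSup₂ (f := fun y (_ : y ∈ {y | 0 < C y ∧ lowerApprox 𝒞₂ C y = 0}) =>
            nbhd 𝒞₂ y) x ⟨hCx, h0⟩
      _ ≤ upperApprox 𝒞₂ C := le_sup_left
      _ = C := h C hC.1
  · have hpos : 0 < lowerApprox 𝒞₂ C x :=
      lt_of_le_of_ne (by exact_mod_cast (lowerApprox 𝒞₂ C x).2.1) (Ne.symm h0)
    have hex : ∃ C' ∈ {C' ∈ 𝒞₂ | C' ≤ C}, 0 < C' x := by
      by_contra hcon
      push_neg at hcon
      have hle : lowerApprox 𝒞₂ C x ≤ 0 := by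
        have : lowerApprox 𝒞₂ C x = ⨆ C' ∈ {C' ∈ 𝒞₂ | C' ≤ C}, C' x := by
          simp [lowerApprox, iSup_apply]
        rw [this]
        exact iSup₂_le fun C' hC' => hcon C' hC'
      exact absurd hle hpos.not_ge
    obtain ⟨C', hC'mem, hC'x⟩ := hex
    calc nbhd 𝒞₂ x ≤ C' := iInf₂_le C' ⟨hC'mem.1, hC'x⟩
      _ ≤ C := hC'mem.2

/-- If each member of either covering has the same upper approximation in both coverings,
then both coverings give the same union of neighborhoods over the support of any fuzzy set. -/
theorem biSup_nbhd_eq_of_upperApprox_eq {U : Type*} [Fintype U] [Nonempty U]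
    (𝒞₁ 𝒞₂ : Set (U → unitInterval))
    (h₁ : IsFuzzyCovering 𝒞₁) (h₂ : IsFuzzyCovering 𝒞₂)
    (h : ∀ C ∈ 𝒞₁ ∪ 𝒞₂, upperApprox 𝒞₁ C = upperApprox 𝒞₂ C) :
    ∀ X : U → unitInterval,
      (⨆ x ∈ {x | 0 < X x}, nbhd 𝒞₁ x) = ⨆ x ∈ {x | 0 < X x}, nbhd 𝒞₂ x := by
  have ha : ∀ C ∈ 𝒞₁, upperApprox 𝒞₂ C = C := fun C hC =>
    (h C (Or.inl hC)).symm.trans (upperApprox_self' 𝒞₁ hC)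
  have hb : ∀ C ∈ 𝒞₂, upperApprox 𝒞₁ C = C := fun C hC =>
    (h C (Or.inr hC)).trans (upperApprox_self' 𝒞₂ hC)
  have hn : ∀ x, nbhd 𝒞₁ x = nbhd 𝒞₂ x := fun x =>
    le_antisymm (nbhd_le_nbhd' 𝒞₂ 𝒞₁ hb x) (nbhd_le_nbhd' 𝒞₁ 𝒞₂ ha x)
  intro X
  exact iSup_congr fun x => by rw [hn x]

end
end

section
/- Let 𝒞 be a fuzzy covering of a finite nonempty set U. If lower_𝒞(X) ∩ lower_𝒞(Y) = lower_𝒞(X ∩ Y) for all fuzzy sets X, Y of U, then for any C1, C2 ∈ 𝒞, the fuzzy set C1 ∩ C2 is either identically zero or equal to the union (pointwise supremum) of some nonempty subfamily of 𝒞. -/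
noncomputable section

theorem lowerApprox_le {U : Type*} (𝒞 : Set (U → unitInterval)) (X : U → unitInterval) :
    lowerApprox 𝒞 X ≤ X :=
  iSup₂_le fun _ hC => hC.2

theorem lowerApprox_eq_self_of_mem {U : Type*} {𝒞 : Set (U → unitInterval)} {C : U → unitInterval}
    (hC : C ∈ 𝒞) : lowerApprox 𝒞 C = C :=
  (lowerApprox_le 𝒞 C).antisymm (le_iSup₂_of_le C ⟨hC, le_rfl⟩ le_rfl)

theorem lowerApprox_eq_zero_or_eq_iSup {U : Type*} (𝒞 : Set (U → unitInterval))
    (X : U → unitInterval) :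
    lowerApprox 𝒞 X = (fun _ => 0) ∨
      ∃ S : Set (U → unitInterval), S ⊆ 𝒞 ∧ S.Nonempty ∧ lowerApprox 𝒞 X = ⨆ C ∈ S, C := by
  rcases ({C ∈ 𝒞 | C ≤ X} : Set (U → unitInterval)).eq_empty_or_nonempty with hS | hS
  · left
    rw [lowerApprox, hS]
    simp only [Set.mem_empty_iff_false, iSup_false, iSup_const]
    rfl
  · exact Or.inr ⟨_, fun _ hC => hC.1, hS, rfl⟩

theorem inter_eq_zero_or_union_of_lowerApprox_inf_general {U : Type*}
    (𝒞 : Set (U → unitInterval))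
    (h : ∀ X Y : U → unitInterval,
      lowerApprox 𝒞 X ⊓ lowerApprox 𝒞 Y = lowerApprox 𝒞 (X ⊓ Y)) :
    ∀ C₁ ∈ 𝒞, ∀ C₂ ∈ 𝒞,
      C₁ ⊓ C₂ = (fun _ => 0) ∨
      ∃ S : Set (U → unitInterval), S ⊆ 𝒞 ∧ S.Nonempty ∧ C₁ ⊓ C₂ = ⨆ C ∈ S, C := by
  intro C₁ h₁ C₂ h₂
  have hinf : lowerApprox 𝒞 (C₁ ⊓ C₂) = C₁ ⊓ C₂ := by
    rw [← h, lowerApprox_eq_self_of_mem h₁, lowerApprox_eq_self_of_mem h₂]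
  rw [← hinf]
  exact lowerApprox_eq_zero_or_eq_iSup 𝒞 (C₁ ⊓ C₂)

/-- If the lower approximation operator distributes over intersections, then the intersection
of any two members of `𝒞` is identically zero or a union of a nonempty subfamily of `𝒞`. -/
theorem inter_eq_zero_or_union_of_lowerApprox_inf {U : Type*} [Fintype U] [Nonempty U]
    (𝒞 : Set (U → unitInterval)) (h𝒞 : IsFuzzyCovering 𝒞)
    (h : ∀ X Y : U → unitInterval,
      lowerApprox 𝒞 X ⊓ lowerApprox 𝒞 Y = lowerApprox 𝒞 (X ⊓ Y)) :
    ∀ C₁ ∈ 𝒞, ∀ C₂ ∈ 𝒞,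
      C₁ ⊓ C₂ = (fun _ => 0) ∨
      ∃ S : Set (U → unitInterval), S ⊆ 𝒞 ∧ S.Nonempty ∧ C₁ ⊓ C₂ = ⨆ C ∈ S, C :=
  inter_eq_zero_or_union_of_lowerApprox_inf_general 𝒞 h

end
end
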